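/- On the Cartesian torus grid, let κ > 0, Δt > 0, let B satisfy hypotheses (H2) and (H3) with α ∈ [0,1), and let W_{ij} ∈ L¹(T^d) (i,j = 1,…,n) satisfy the symmetry W_{ij}(x) = W_{ji}(−x) for a.e. x and the positive semidefiniteness ∑_{i,j=1}^n ∫∫ W_{ij}(x−y)·v_i(x)·v_j(y) dx dy ≥ 0 for all v_1,…,v_n ∈ L²(T^d). Let u⁰_i : G → [0,∞) and let (u^k)_{k=1,…,N} be componentwise strictly positive and solve the implicit Euler scheme with fully implicit potentials. Then the following uniform bound on the discrete Fisher information holds: (1−α)·(H_B(u^N) − H_B(u⁰)) + (α/κ)·(H_R(u^N) − H_R(u⁰)) + κ·(1−α)²·∑_{k=1}^N Δt·∑_{i=1}^n ∑_{σ∈E} τ_σ·|D_σ √(u^k_i)|² ≤ 0. -/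

import Mathlib

open MeasureTheory Real Finset

namespace SG

instance : Fact ((0:ℝ) < 1) := ⟨one_pos⟩

variable {d : ℕ}

/-- Cells of the Cartesian torus grid. -/
abbrev Cell (M : Fin d → ℕ) := ∀ ℓ : Fin d, ZMod (M ℓ)

/-- Cell measure `m(K) = Δx₁⋯Δx_d`. -/
noncomputable def mK (M : Fin d → ℕ) : ℝ := ∏ ℓ, ((M ℓ : ℝ))⁻¹

/-- Transmissibility coefficient of an edge in direction `ℓ`:
`τ_σ = m(σ)/d_σ = m(K)·M_ℓ²`. -/
noncomputable def τ (M : Fin d → ℕ) (ℓ : Fin d) : ℝ := mK M * (M ℓ : ℝ) ^ 2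

/-- Shift a cell by `s` in direction `ℓ` (mod `M ℓ`). -/
def shift (M : Fin d → ℕ) (K : Cell M) (ℓ : Fin d) (s : ℤ) : Cell M :=
  Function.update K ℓ (K ℓ + (s : ZMod (M ℓ)))

/-- Hypothesis (H2): `B` is continuous on `[0,∞)` with `0 < B(s) ≤ 1` for `s ≥ 0`. -/
def H2 (B : ℝ → ℝ) : Prop :=
  ContinuousOn B (Set.Ici 0) ∧ ∀ s : ℝ, 0 ≤ s → 0 < B s ∧ B s ≤ 1

/-- Hypothesis (H3): `α ∈ [0,1)` and `B(s) ≥ 1 − α·s` for all `s ≥ 0`. -/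
def H3 (B : ℝ → ℝ) (α : ℝ) : Prop :=
  0 ≤ α ∧ α < 1 ∧ ∀ s : ℝ, 0 ≤ s → 1 - α * s ≤ B s

/-- The scaled weight function `B_κ(s) = κ·B(s/κ)`. -/
noncomputable def Bk (κ : ℝ) (B : ℝ → ℝ) (s : ℝ) : ℝ := κ * B (s / κ)

/-- Upwind value on the (oriented) edge from `K` to `L`. -/
noncomputable def upw {M : Fin d → ℕ} (u p : Cell M → ℝ) (K L : Cell M) : ℝ :=
  if 0 ≤ p L - p K then u L else u K

/-- Numerical flux `F_{K,σ}[u,p]` from `K` through the edge (in direction `ℓ`) to its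
neighbor `L`. -/
noncomputable def flux (M : Fin d → ℕ) (κ : ℝ) (B : ℝ → ℝ) (u p : Cell M → ℝ)
    (ℓ : Fin d) (K L : Cell M) : ℝ :=
  -(τ M ℓ) * (Bk κ B |p L - p K| * (u L - u K) + upw u p K L * (p L - p K))

/-- Sum of the numerical fluxes over the `2d` edges incident to `K`. -/
noncomputable def fluxSum (M : Fin d → ℕ) (κ : ℝ) (B : ℝ → ℝ) (u p : Cell M → ℝ)
    (K : Cell M) : ℝ :=
  ∑ ℓ : Fin d, (flux M κ B u p ℓ K (shift M K ℓ 1) + flux M κ B u p ℓ K (shift M K ℓ (-1)))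

/-- One implicit Euler finite-volume step with prescribed potential `p`. -/
def Step (M : Fin d → ℕ) (κ Δt : ℝ) (B : ℝ → ℝ) (uPrev u p : Cell M → ℝ) : Prop :=
  ∀ K : Cell M, mK M * (u K - uPrev K) / Δt + fluxSum M κ B u p K = 0

/-- Discrete Boltzmann entropy. -/
noncomputable def HB (M : Fin d → ℕ) [∀ ℓ, NeZero (M ℓ)] {n : ℕ}
    (u : Fin n → Cell M → ℝ) : ℝ :=
  ∑ i, ∑ K : Cell M, mK M * (u i K * (Real.log (u i K) - 1))

/-- Discrete Rao entropy associated to discrete kernels `Wd`. -/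
noncomputable def HR (M : Fin d → ℕ) [∀ ℓ, NeZero (M ℓ)] {n : ℕ}
    (Wd : Fin n → Fin n → Cell M → Cell M → ℝ) (u : Fin n → Cell M → ℝ) : ℝ :=
  (1/2) * ∑ i, ∑ j, ∑ K : Cell M, ∑ J : Cell M,
    mK M * mK M * Wd i j K J * u i K * u j J

/-- Boltzmann entropy production term `P_B`. -/
noncomputable def PB (M : Fin d → ℕ) [∀ ℓ, NeZero (M ℓ)] {n : ℕ} (κ : ℝ) (B : ℝ → ℝ)
    (u p : Fin n → Cell M → ℝ) : ℝ :=
  4 * ∑ i, ∑ K : Cell M, ∑ ℓ : Fin d,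
    τ M ℓ * Bk κ B |p i (shift M K ℓ 1) - p i K| *
      (Real.sqrt (u i (shift M K ℓ 1)) - Real.sqrt (u i K)) ^ 2

/-- Rao entropy production term `P_R`. -/
noncomputable def PR (M : Fin d → ℕ) [∀ ℓ, NeZero (M ℓ)] {n : ℕ}
    (u p : Fin n → Cell M → ℝ) : ℝ :=
  ∑ i, ∑ K : Cell M, ∑ ℓ : Fin d,
    τ M ℓ * upw (u i) (p i) K (shift M K ℓ 1) * (p i (shift M K ℓ 1) - p i K) ^ 2

/-- Cross term `X(u,p)`. -/
noncomputable def Xc (M : Fin d → ℕ) [∀ ℓ, NeZero (M ℓ)] {n : ℕ}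
    (u p : Fin n → Cell M → ℝ) : ℝ :=
  ∑ i, ∑ K : Cell M, ∑ ℓ : Fin d,
    τ M ℓ * (p i (shift M K ℓ 1) - p i K) * (u i (shift M K ℓ 1) - u i K)

/-- Discrete Fisher information `∑_i ∑_σ τ_σ |D_σ √u_i|²`. -/
noncomputable def Fisher (M : Fin d → ℕ) [∀ ℓ, NeZero (M ℓ)] {n : ℕ}
    (u : Fin n → Cell M → ℝ) : ℝ :=
  ∑ i, ∑ K : Cell M, ∑ ℓ : Fin d,
    τ M ℓ * (Real.sqrt (u i (shift M K ℓ 1)) - Real.sqrt (u i K)) ^ 2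

/-- The torus `T^d = (ℝ/ℤ)^d`. -/
abbrev Td (d : ℕ) := Fin d → AddCircle (1 : ℝ)

/-- The box `Q_K ⊆ T^d` corresponding to the cell `K`. -/
noncomputable def QK (M : Fin d → ℕ) (K : Cell M) : Set (Td d) :=
  Set.univ.pi fun ℓ => (fun t : ℝ => (t : AddCircle (1 : ℝ))) ''
    Set.Ico (((K ℓ).val : ℝ) / (M ℓ)) ((((K ℓ).val : ℝ) + 1) / (M ℓ))

/-- The discrete kernel `W_{KJ} = (m(K)m(J))⁻¹ ∫_{Q_K}∫_{Q_J} W(x−y) dy dx`. -/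
noncomputable def Wdisc (M : Fin d → ℕ) (W : Td d → ℝ) (K J : Cell M) : ℝ :=
  (mK M * mK M)⁻¹ * ∫ x in QK M K, ∫ y in QK M J, W (x - y)

/-- The discrete nonlocal potential `p_i(K) = ∑_j ∑_J m(J)·Wd^{ij}_{KJ}·u_j(J)`. -/
noncomputable def pot (M : Fin d → ℕ) [∀ ℓ, NeZero (M ℓ)] {n : ℕ}
    (Wd : Fin n → Fin n → Cell M → Cell M → ℝ) (u : Fin n → Cell M → ℝ)
    (i : Fin n) (K : Cell M) : ℝ :=
  ∑ j, ∑ J : Cell M, mK M * Wd i j K J * u j J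

/-- Discrete `L^q` norm of a cell function. -/
noncomputable def normq (M : Fin d → ℕ) [∀ ℓ, NeZero (M ℓ)] (q : ℝ)
    (u : Cell M → ℝ) : ℝ :=
  (∑ K : Cell M, mK M * |u K| ^ q) ^ (1/q)

/-- Discrete `L^q` norm of an edge function (dual-cell measure `m(Δ_σ) = m(σ)·d_σ = m(K)`). -/
noncomputable def enorm (M : Fin d → ℕ) [∀ ℓ, NeZero (M ℓ)] (q : ℝ)
    (w : Cell M → Fin d → ℝ) : ℝ :=
  (∑ K : Cell M, ∑ ℓ : Fin d, mK M * |w K ℓ| ^ q) ^ (1/q)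

/-- Magnitude of the discrete gradient on the edge `(K,ℓ)`:
`|∇^h_σ v| = d·D_σ v/d_σ`. -/
noncomputable def gradh (M : Fin d → ℕ) (v : Cell M → ℝ) (K : Cell M) (ℓ : Fin d) : ℝ :=
  d * (M ℓ : ℝ) * |v (shift M K ℓ 1) - v K|

/-!
The scheme is tested with the entropy variable `ψ = (1 - α) log u + (α / κ) p`. Convexity of
`s ↦ s (log s - 1)`, and of the Rao entropy (a quadratic form with symmetric positive semidefinite
kernel), bounds the entropy increment of one step by `∑_K m(K) (u^k - u^{k-1}) ψ`, which the scheme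
and a discrete summation by parts turn into `-Δt ∑_σ F_σ D_σ ψ`. On each edge an elementary
inequality, resting on `B_κ(s) ≥ κ - α s` and `y log (y / x) ≥ y - x + (√y - √x)²`, bounds
`F_σ D_σ ψ` below by `τ_σ (D_σ p D_σ u + κ (1 - α)² (D_σ √u)²)`. The cross term
`∑_σ τ_σ D_σ p D_σ u` is nonnegative because the discrete kernels inherit translation invariance
and positive semidefiniteness from `W`. Summing over the time steps telescopes the entropies.
-/

lemma sub_add_sq_sqrt_sub_le_mul_log_sub {x y : ℝ} (hx : 0 < x) (hy : 0 < y) :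
    y - x + (√y - √x) ^ 2 ≤ y * (log y - log x) := by
  have ha : 0 < √x := sqrt_pos.2 hx
  have hb : 0 < √y := sqrt_pos.2 hy
  have hlog : log y - log x = 2 * log (√y / √x) := by
    rw [log_div hb.ne' ha.ne', log_sqrt hy.le, log_sqrt hx.le]; ring
  have h := one_sub_inv_le_log_of_pos (div_pos hb ha)
  rw [inv_div] at h
  have e : y - x + (√y - √x) ^ 2 = 2 * y * (1 - √x / √y) := by
    field_simp
    linear_combination (√y - 2 * √x) * sq_sqrt hy.le + √y * sq_sqrt hx.le
  rw [e, hlog]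
  linear_combination (2 * y) * h

lemma two_mul_sq_sqrt_sub_le_sub_mul_log_sub {x y : ℝ} (hx : 0 < x) (hy : 0 < y) :
    2 * (√y - √x) ^ 2 ≤ (y - x) * (log y - log x) := by
  have hxy := sub_add_sq_sqrt_sub_le_mul_log_sub hx hy
  have hyx := sub_add_sq_sqrt_sub_le_mul_log_sub hy hx
  linear_combination hxy + hyx

lemma edge_ineq_of_nonneg {κ α P q x y : ℝ} (hκ : 0 < κ) (hα0 : 0 ≤ α) (hα1 : α ≤ 1)
    (hx : 0 < x) (hy : 0 < y) (hq : 0 ≤ q) (hP : 0 ≤ P) (hPκ : P ≤ κ) (hPq : κ - α * q ≤ P) :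
    κ * (q * (y - x) + κ * (1 - α) ^ 2 * (√y - √x) ^ 2) ≤
      (P * (y - x) + y * q) * (κ * (1 - α) * (log y - log x) + α * q) := by
  have hlog₁ := two_mul_sq_sqrt_sub_le_sub_mul_log_sub hx hy
  have hlog₂ := sub_add_sq_sqrt_sub_le_mul_log_sub hx hy
  have hupw : (κ - P) * (y - x) ≤ q * y := by
    calc (κ - P) * (y - x) ≤ (κ - P) * y := by nlinarith
      _ ≤ α * q * y := by nlinarith
      _ ≤ q * y := by nlinarith [mul_nonneg hq hy.le]
  have hdiff : κ * (1 - α) ≤ 2 * P + q := by nlinarith [mul_nonneg hα0 hκ.le]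
  linear_combination (κ * (1 - α) * P) * hlog₁ + (κ * (1 - α) * q) * hlog₂ + (α * q) * hupw
    + (κ * (1 - α) * (√y - √x) ^ 2) * hdiff

lemma edge_ineq {κ α P q x y : ℝ} (hκ : 0 < κ) (hα0 : 0 ≤ α) (hα1 : α ≤ 1)
    (hx : 0 < x) (hy : 0 < y) (hP : 0 ≤ P) (hPκ : P ≤ κ) (hPq : κ - α * |q| ≤ P) :
    q * (y - x) + κ * (1 - α) ^ 2 * (√y - √x) ^ 2 ≤
      (P * (y - x) + (if 0 ≤ q then y else x) * q) *
        ((1 - α) * (log y - log x) + α / κ * q) := by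
  have hκα : ∀ A, κ * (A * ((1 - α) * (log y - log x) + α / κ * q))
      = A * (κ * (1 - α) * (log y - log x) + α * q) := by
    intro A; field_simp
  rw [← mul_le_mul_iff_of_pos_left hκ, hκα]
  split_ifs with hq
  · rw [abs_of_nonneg hq] at hPq
    exact edge_ineq_of_nonneg hκ hα0 hα1 hx hy hq hP hPκ hPq
  · -- exchanging the two cells turns a negative potential jump into a positive one
    rw [abs_of_neg (not_le.1 hq)] at hPq
    have h := edge_ineq_of_nonneg (q := -q) hκ hα0 hα1 hy hx (by linarith) hP hPκ hPq
    linear_combination h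

lemma Bk_bounds {κ α s : ℝ} {B : ℝ → ℝ} (hκ : 0 < κ) (hB : H2 B) (hB3 : H3 B α) (hs : 0 ≤ s) :
    0 < Bk κ B s ∧ Bk κ B s ≤ κ ∧ κ - α * s ≤ Bk κ B s := by
  have hsκ : 0 ≤ s / κ := div_nonneg hs hκ.le
  obtain ⟨hpos, hle⟩ := hB.2 _ hsκ
  have hlow := hB3.2.2 _ hsκ
  refine ⟨mul_pos hκ hpos, by unfold Bk; nlinarith, ?_⟩
  unfold Bk
  have e : κ * (1 - α * (s / κ)) = κ - α * s := by field_simp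
  nlinarith

lemma τ_nonneg (M : Fin d → ℕ) (ℓ : Fin d) : 0 ≤ τ M ℓ := by
  unfold τ mK; positivity

lemma flux_mul_sub_ge {M : Fin d → ℕ} {κ α : ℝ} {B : ℝ → ℝ} (hκ : 0 < κ) (hB : H2 B)
    (hB3 : H3 B α) (u p : Cell M → ℝ) (ℓ : Fin d) {K L : Cell M} (hK : 0 < u K)
    (hL : 0 < u L) :
    τ M ℓ * ((p L - p K) * (u L - u K) + κ * (1 - α) ^ 2 * (√(u L) - √(u K)) ^ 2) ≤
      flux M κ B u p ℓ K L * (((1 - α) * log (u K) + α / κ * p K)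
        - ((1 - α) * log (u L) + α / κ * p L)) := by
  obtain ⟨hP, hPκ, hPq⟩ := Bk_bounds hκ hB hB3 (abs_nonneg (p L - p K))
  have h := edge_ineq hκ hB3.1 hB3.2.1.le hK hL hP.le hPκ hPq
  calc _ ≤ τ M ℓ * ((Bk κ B |p L - p K| * (u L - u K)
          + (if 0 ≤ p L - p K then u L else u K) * (p L - p K))
          * ((1 - α) * (log (u L) - log (u K)) + α / κ * (p L - p K))) :=
        mul_le_mul_of_nonneg_left (by linarith) (τ_nonneg M ℓ)
    _ = _ := by unfold flux upw; ring

section Grid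

variable {M : Fin d → ℕ}

lemma shift_shift (K : Cell M) (ℓ : Fin d) (s t : ℤ) :
    shift M (shift M K ℓ s) ℓ t = shift M K ℓ (s + t) := by
  simp [shift, add_assoc]

lemma shift_zero (K : Cell M) (ℓ : Fin d) : shift M K ℓ 0 = K := by
  simp [shift]

lemma shift_one_neg_one (K : Cell M) (ℓ : Fin d) : shift M (shift M K ℓ 1) ℓ (-1) = K := by
  rw [shift_shift, add_neg_cancel, shift_zero]

lemma shift_neg_one_one (K : Cell M) (ℓ : Fin d) : shift M (shift M K ℓ (-1)) ℓ 1 = K := by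
  rw [shift_shift, neg_add_cancel, shift_zero]

def shiftEquiv (M : Fin d → ℕ) (ℓ : Fin d) : Cell M ≃ Cell M where
  toFun K := shift M K ℓ 1
  invFun K := shift M K ℓ (-1)
  left_inv K := shift_one_neg_one K ℓ
  right_inv K := shift_neg_one_one K ℓ

lemma flux_swap (κ : ℝ) (B : ℝ → ℝ) (u p : Cell M → ℝ) (ℓ : Fin d) (K L : Cell M) :
    flux M κ B u p ℓ L K = -flux M κ B u p ℓ K L := by
  unfold flux upw
  rw [abs_sub_comm (p K)]
  split_ifs with h₁ h₂ h₂
  · have hp : p L = p K := by linarith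
    rw [hp]; ring
  · ring
  · ring
  · exfalso; linarith

variable [∀ ℓ, NeZero (M ℓ)]

lemma sum_shift {R : Type*} [AddCommMonoid R] (ℓ : Fin d) (f : Cell M → R) :
    ∑ K : Cell M, f (shift M K ℓ 1) = ∑ K : Cell M, f K :=
  Equiv.sum_comp (shiftEquiv M ℓ) f

lemma mK_pos : 0 < mK M :=
  prod_pos fun ℓ _ => inv_pos.2 (Nat.cast_pos.2 (Nat.pos_of_ne_zero (NeZero.ne (M ℓ))))

lemma sum_fluxSum_mul (κ : ℝ) (B : ℝ → ℝ) (u p φ : Cell M → ℝ) :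
    ∑ K : Cell M, fluxSum M κ B u p K * φ K
      = ∑ K : Cell M, ∑ ℓ : Fin d,
          flux M κ B u p ℓ K (shift M K ℓ 1) * (φ K - φ (shift M K ℓ 1)) := by
  have hback : ∀ ℓ, ∑ K : Cell M, flux M κ B u p ℓ K (shift M K ℓ (-1)) * φ K
      = ∑ K : Cell M, -(flux M κ B u p ℓ K (shift M K ℓ 1) * φ (shift M K ℓ 1)) := by
    intro ℓ
    rw [← sum_shift ℓ]
    simp only [shift_one_neg_one, flux_swap κ B u p ℓ _ (shift M _ ℓ 1), neg_mul]
  simp only [fluxSum, sum_mul]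
  rw [sum_comm]
  conv_rhs => rw [sum_comm]
  refine sum_congr rfl fun ℓ _ => ?_
  simp only [add_mul, sum_add_distrib]
  rw [hback, ← sum_add_distrib]
  exact sum_congr rfl fun K _ => by ring

lemma Step.sum_mul_eq {κ Δt : ℝ} {B : ℝ → ℝ} {v u p : Cell M → ℝ} (hΔt : Δt ≠ 0)
    (hs : Step M κ Δt B v u p) (φ : Cell M → ℝ) :
    ∑ K : Cell M, mK M * ((u K - v K) * φ K)
      = -Δt * ∑ K : Cell M, ∑ ℓ : Fin d,
          flux M κ B u p ℓ K (shift M K ℓ 1) * (φ K - φ (shift M K ℓ 1)) := by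
  rw [← sum_fluxSum_mul, mul_sum]
  refine sum_congr rfl fun K _ => ?_
  have h := hs K
  field_simp at h
  linear_combination φ K * h

end Grid

lemma mul_log_sub_one_sub_le {x y : ℝ} (hx : 0 < x) (hy : 0 ≤ y) :
    x * (log x - 1) - y * (log y - 1) ≤ (x - y) * log x := by
  rcases hy.eq_or_lt with rfl | hy
  · simp only [zero_mul, sub_zero]; linarith
  · have h := log_le_sub_one_of_pos (div_pos hx hy)
    rw [log_div hx.ne' hy.ne', le_sub_iff_add_le, le_div_iff₀ hy] at h
    linarith

section Entropy

variable {M : Fin d → ℕ} [∀ ℓ, NeZero (M ℓ)] {n : ℕ}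

lemma HB_sub_le {u v : Fin n → Cell M → ℝ} (hu : ∀ i K, 0 < u i K) (hv : ∀ i K, 0 ≤ v i K) :
    HB M u - HB M v ≤ ∑ i, ∑ K : Cell M, mK M * ((u i K - v i K) * log (u i K)) := by
  simp only [HB, ← sum_sub_distrib, ← mul_sub]
  gcongr with i _ K _
  · exact mK_pos.le
  · exact mul_log_sub_one_sub_le (hu i K) (hv i K)

noncomputable def kernelForm (M : Fin d → ℕ) [∀ ℓ, NeZero (M ℓ)]
    (Wd : Fin n → Fin n → Cell M → Cell M → ℝ) (c e : Fin n → Cell M → ℝ) : ℝ :=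
  ∑ i, ∑ j, ∑ K : Cell M, ∑ J : Cell M, mK M * mK M * Wd i j K J * c i K * e j J

variable (Wd : Fin n → Fin n → Cell M → Cell M → ℝ)

lemma kernelForm_sub_left (c e f : Fin n → Cell M → ℝ) :
    kernelForm M Wd (c - e) f = kernelForm M Wd c f - kernelForm M Wd e f := by
  simp only [kernelForm, Pi.sub_apply, mul_sub, sub_mul, sum_sub_distrib]

lemma kernelForm_sub_right (c e f : Fin n → Cell M → ℝ) :
    kernelForm M Wd f (c - e) = kernelForm M Wd f c - kernelForm M Wd f e := by
  simp only [kernelForm, Pi.sub_apply, mul_sub, sum_sub_distrib]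

lemma kernelForm_comm (hsymm : ∀ i j K J, Wd i j K J = Wd j i J K) (c e : Fin n → Cell M → ℝ) :
    kernelForm M Wd c e = kernelForm M Wd e c := by
  unfold kernelForm
  rw [sum_comm]
  refine sum_congr rfl fun i _ => sum_congr rfl fun j _ => ?_
  rw [sum_comm]
  refine sum_congr rfl fun K _ => sum_congr rfl fun J _ => ?_
  rw [hsymm]; ring

lemma sum_mul_pot (c u : Fin n → Cell M → ℝ) :
    ∑ i, ∑ K : Cell M, mK M * (c i K * pot M Wd u i K) = kernelForm M Wd c u := by
  unfold pot kernelForm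
  refine sum_congr rfl fun i _ => ?_
  rw [sum_comm]
  simp only [mul_sum]
  refine sum_congr rfl fun j _ => sum_congr rfl fun K _ => sum_congr rfl fun J _ => by ring

lemma HR_sub_le (hsymm : ∀ i j K J, Wd i j K J = Wd j i J K)
    (hpsd : ∀ c, 0 ≤ kernelForm M Wd c c) (u v : Fin n → Cell M → ℝ) :
    HR M Wd u - HR M Wd v ≤ ∑ i, ∑ K : Cell M, mK M * ((u i K - v i K) * pot M Wd u i K) := by
  have hHR : ∀ w, HR M Wd w = kernelForm M Wd w w / 2 := fun w => by
    unfold HR kernelForm; ring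
  have hlin := sum_mul_pot Wd (u - v) u
  simp only [Pi.sub_apply] at hlin
  have h := hpsd (u - v)
  rw [kernelForm_sub_left, kernelForm_sub_right, kernelForm_sub_right,
    kernelForm_comm Wd hsymm v u] at h
  rw [hlin, hHR, hHR, kernelForm_sub_left, kernelForm_comm Wd hsymm v u]
  linarith

lemma pot_shift_sub (hshift : ∀ i j ℓ K J, Wd i j (shift M K ℓ 1) J = Wd i j K (shift M J ℓ (-1)))
    (u : Fin n → Cell M → ℝ) (i : Fin n) (ℓ : Fin d) (K : Cell M) :
    pot M Wd u i (shift M K ℓ 1) - pot M Wd u i K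
      = pot M Wd (fun j J => u j (shift M J ℓ 1) - u j J) i K := by
  unfold pot
  simp only [hshift, mul_sub, sum_sub_distrib]
  congr 1
  refine sum_congr rfl fun j _ => ?_
  rw [← sum_shift ℓ]
  simp only [shift_one_neg_one]

lemma Xc_pot_nonneg (hpsd : ∀ c, 0 ≤ kernelForm M Wd c c)
    (hshift : ∀ i j ℓ K J, Wd i j (shift M K ℓ 1) J = Wd i j K (shift M J ℓ (-1)))
    (u : Fin n → Cell M → ℝ) : 0 ≤ Xc M u (pot M Wd u) := by
  have hXc : Xc M u (pot M Wd u) = ∑ ℓ : Fin d, τ M ℓ / mK M *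
      kernelForm M Wd (fun j J => u j (shift M J ℓ 1) - u j J)
        (fun j J => u j (shift M J ℓ 1) - u j J) := by
    unfold Xc
    simp only [sum_comm (s := (univ : Finset (Cell M))) (t := (univ : Finset (Fin d)))]
    rw [sum_comm]
    refine sum_congr rfl fun ℓ _ => ?_
    rw [← sum_mul_pot, mul_sum]
    refine sum_congr rfl fun i _ => ?_
    rw [mul_sum]
    refine sum_congr rfl fun K _ => ?_
    rw [← pot_shift_sub Wd hshift]
    field_simp [mK_pos.ne']
  rw [hXc]
  exact sum_nonneg fun ℓ _ => mul_nonneg (div_nonneg (τ_nonneg M ℓ) mK_pos.le) (hpsd _)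

end Entropy

section Dissipation

variable {M : Fin d → ℕ} [∀ ℓ, NeZero (M ℓ)] {n : ℕ} {κ α : ℝ} {B : ℝ → ℝ}

lemma Xc_add_Fisher_le (hκ : 0 < κ) (hB : H2 B) (hB3 : H3 B α) {u : Fin n → Cell M → ℝ}
    (hu : ∀ i K, 0 < u i K) (p : Fin n → Cell M → ℝ) :
    Xc M u p + κ * (1 - α) ^ 2 * Fisher M u ≤
      ∑ i, ∑ K : Cell M, ∑ ℓ : Fin d, flux M κ B (u i) (p i) ℓ K (shift M K ℓ 1) *
        (((1 - α) * log (u i K) + α / κ * p i K)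
          - ((1 - α) * log (u i (shift M K ℓ 1)) + α / κ * p i (shift M K ℓ 1))) := by
  simp only [Xc, Fisher, mul_sum, ← sum_add_distrib]
  gcongr with i _ K _ ℓ _
  exact le_of_eq_of_le (by ring)
    (flux_mul_sub_ge hκ hB hB3 (u i) (p i) ℓ (hu i K) (hu i (shift M K ℓ 1)))

lemma entropy_step {Δt : ℝ} (hκ : 0 < κ) (hΔt : 0 < Δt) (hB : H2 B) (hB3 : H3 B α)
    (Wd : Fin n → Fin n → Cell M → Cell M → ℝ) (hsymm : ∀ i j K J, Wd i j K J = Wd j i J K)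
    (hpsd : ∀ c, 0 ≤ kernelForm M Wd c c)
    (hshift : ∀ i j ℓ K J, Wd i j (shift M K ℓ 1) J = Wd i j K (shift M J ℓ (-1)))
    {u v : Fin n → Cell M → ℝ} (hu : ∀ i K, 0 < u i K) (hv : ∀ i K, 0 ≤ v i K)
    (hstep : ∀ i, Step M κ Δt B (v i) (u i) (pot M Wd u i)) :
    (1 - α) * (HB M u - HB M v) + α / κ * (HR M Wd u - HR M Wd v)
      + κ * (1 - α) ^ 2 * (Δt * Fisher M u) ≤ 0 := by
  set ψ : Fin n → Cell M → ℝ := fun i K => (1 - α) * log (u i K) + α / κ * pot M Wd u i K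
  have hentropy : (1 - α) * (HB M u - HB M v) + α / κ * (HR M Wd u - HR M Wd v)
      ≤ ∑ i, ∑ K : Cell M, mK M * ((u i K - v i K) * ψ i K) := by
    have hsplit : ∑ i, ∑ K : Cell M, mK M * ((u i K - v i K) * ψ i K)
        = (1 - α) * ∑ i, ∑ K : Cell M, mK M * ((u i K - v i K) * log (u i K))
          + α / κ * ∑ i, ∑ K : Cell M, mK M * ((u i K - v i K) * pot M Wd u i K) := by
      simp only [ψ, mul_sum, ← sum_add_distrib]
      exact sum_congr rfl fun i _ => sum_congr rfl fun K _ => by ring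
    rw [hsplit]
    gcongr
    · linarith [hB3.2.1]
    · exact HB_sub_le hu hv
    · exact div_nonneg hB3.1 hκ.le
    · exact HR_sub_le Wd hsymm hpsd u v
  have hscheme : ∑ i, ∑ K : Cell M, mK M * ((u i K - v i K) * ψ i K)
      = -Δt * ∑ i, ∑ K : Cell M, ∑ ℓ : Fin d, flux M κ B (u i) (pot M Wd u i) ℓ K
          (shift M K ℓ 1) * (ψ i K - ψ i (shift M K ℓ 1)) := by
    rw [mul_sum]
    exact sum_congr rfl fun i _ => (hstep i).sum_mul_eq hΔt.ne' (ψ i)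
  have hdiss := mul_le_mul_of_nonneg_left (Xc_add_Fisher_le hκ hB hB3 hu (pot M Wd u)) hΔt.le
  have hX := mul_nonneg hΔt.le (Xc_pot_nonneg Wd hpsd hshift u)
  linarith

end Dissipation

section DifferenceKernels

variable {G : Type*} [MeasurableSpace G] [AddGroup G] [MeasurableAdd₂ G]
  {μ : Measure G} [μ.IsAddRightInvariant]

lemma setIntegral_prod_sub_preimage_add [SFinite μ] (W : G → ℝ) (t : G) (A B : Set G) :
    ∫ z in ((· + t) ⁻¹' A) ×ˢ ((· + t) ⁻¹' B), W (z.1 - z.2) ∂(μ.prod μ)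
      = ∫ z in A ×ˢ B, W (z.1 - z.2) ∂(μ.prod μ) := by
  have hmp : MeasurePreserving (Prod.map (· + t) (· + t)) (μ.prod μ) (μ.prod μ) :=
    (measurePreserving_add_right μ t).prod (measurePreserving_add_right μ t)
  have h := hmp.setIntegral_preimage_emb
    ((MeasurableEquiv.addRight t).prodCongr (MeasurableEquiv.addRight t)).measurableEmbedding
    (fun z => W (z.1 - z.2)) (A ×ˢ B)
  simpa only [Set.preimage_prod_map_prod, Prod.map_fst, Prod.map_snd,
    add_sub_add_right_eq_sub] using h

variable [MeasurableNeg G] [IsProbabilityMeasure μ]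

lemma measurePreserving_fst_sub_snd :
    MeasurePreserving (fun z : G × G => z.1 - z.2) (μ.prod μ) μ := by
  have hfst : MeasurePreserving (Prod.fst : G × G → G) (μ.prod μ) μ :=
    ⟨measurable_fst, by simp [Measure.map_fst_prod]⟩
  exact hfst.comp (measurePreserving_sub_prod μ μ)

lemma integrable_comp_fst_sub_snd {W : G → ℝ} (hW : Integrable W μ) :
    Integrable (fun z : G × G => W (z.1 - z.2)) (μ.prod μ) :=
  (measurePreserving_fst_sub_snd.integrable_comp hW.aestronglyMeasurable).2 hW

lemma setIntegral_prod_sub_swap {W W' : G → ℝ} (h : ∀ᵐ x ∂μ, W x = W' (-x)) (A B : Set G) :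
    ∫ z in A ×ˢ B, W (z.1 - z.2) ∂(μ.prod μ) = ∫ z in B ×ˢ A, W' (z.1 - z.2) ∂(μ.prod μ) := by
  have hae : ∀ᵐ z ∂(μ.prod μ), W (z.1 - z.2) = W' (z.2 - z.1) := by
    filter_upwards [measurePreserving_fst_sub_snd.quasiMeasurePreserving.ae h] with z hz
    rwa [neg_sub] at hz
  rw [integral_congr_ae (ae_restrict_of_ae hae), ← Set.preimage_swap_prod,
    ← Measure.measurePreserving_swap.setIntegral_preimage_emb
      MeasurableEquiv.prodComm.measurableEmbedding]
  rfl

end DifferenceKernels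

section TorusCells

instance : IsProbabilityMeasure (volume : Measure (AddCircle (1 : ℝ))) :=
  ⟨by rw [AddCircle.measure_univ]; norm_num⟩

instance : IsProbabilityMeasure (volume : Measure (Td d)) := by
  rw [volume_pi]; infer_instance

noncomputable def arc (m : ℕ) (c : ZMod m) : Set (AddCircle (1 : ℝ)) :=
  (fun t : ℝ => (t : AddCircle (1 : ℝ))) '' Set.Ico ((c.val : ℝ) / m) (((c.val : ℝ) + 1) / m)

lemma QK_eq_pi (M : Fin d → ℕ) (K : Cell M) : QK M K = Set.univ.pi fun ℓ => arc (M ℓ) (K ℓ) :=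
  rfl

lemma image_coe_Ico_add_intCast (a b : ℝ) (k : ℤ) :
    (fun t : ℝ => (t : AddCircle (1 : ℝ))) '' Set.Ico (a + k) (b + k)
      = (fun t : ℝ => (t : AddCircle (1 : ℝ))) '' Set.Ico a b := by
  rw [← Set.image_add_const_Ico, Set.image_image]
  congr! 1 with t
  rw [AddCircle.coe_add, ← zsmul_one, AddCircle.coe_zsmul, AddCircle.coe_period, smul_zero,
    add_zero]

lemma arc_eq_of_natCast_eq (m : ℕ) [NeZero m] (c : ZMod m) {a : ℕ} (ha : (a : ZMod m) = c) :
    arc m c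
      = (fun t : ℝ => (t : AddCircle (1 : ℝ))) '' Set.Ico ((a : ℝ) / m) (((a : ℝ) + 1) / m) := by
  have hm : (m : ℝ) ≠ 0 := Nat.cast_ne_zero.2 (NeZero.ne m)
  obtain ⟨k, hk⟩ := (ZMod.intCast_eq_intCast_iff_dvd_sub (c.val : ℤ) (a : ℤ) m).1
    (by simpa using ha.symm)
  have hval : (a : ℝ) = c.val + m * k := by exact_mod_cast (by omega : (a : ℤ) = c.val + m * k)
  rw [arc, ← image_coe_Ico_add_intCast _ _ k, hval]
  congr 2
  · field_simp
  · field_simp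
    ring

lemma measurableSet_arc (m : ℕ) [NeZero m] (c : ZMod m) : MeasurableSet (arc m c) := by
  have hm : (0 : ℝ) < m := Nat.cast_pos.2 (Nat.pos_of_ne_zero (NeZero.ne m))
  have hsub : Set.Ico ((c.val : ℝ) / m) (((c.val : ℝ) + 1) / m) ⊆ Set.Ico 0 (0 + 1) :=
    Set.Ico_subset_Ico (by positivity)
      (by rw [zero_add, div_le_one hm]; exact_mod_cast c.val_lt)
  exact measurableSet_Ico.image_of_continuousOn_injOn
    (AddCircle.continuous_mk' 1).continuousOn
    fun x hx y hy h => (AddCircle.coe_eq_coe_iff_of_mem_Ico (hsub hx) (hsub hy)).1 h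

lemma preimage_add_arc_add_one (m : ℕ) [NeZero m] (c : ZMod m) :
    (· + (((m : ℝ)⁻¹ : ℝ) : AddCircle (1 : ℝ))) ⁻¹' arc m (c + 1) = arc m c := by
  have hm : (m : ℝ) ≠ 0 := Nat.cast_ne_zero.2 (NeZero.ne m)
  have himage : arc m (c + 1) = (· + (((m : ℝ)⁻¹ : ℝ) : AddCircle (1 : ℝ))) '' arc m c := by
    have hcoe : (fun t : ℝ => (t : AddCircle (1 : ℝ)) + (((m : ℝ)⁻¹ : ℝ) : AddCircle (1 : ℝ)))
        = (fun t : ℝ => (t : AddCircle (1 : ℝ))) ∘ (· + (m : ℝ)⁻¹) := by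
      funext t; simp
    rw [arc_eq_of_natCast_eq m (c + 1) (a := c.val + 1) (by simp), arc, Set.image_image, hcoe,
      Set.image_comp, Set.image_add_const_Ico]
    congr 2 <;> push_cast <;> field_simp
  rw [himage, Set.preimage_image_eq _ (add_left_injective _)]

variable {M : Fin d → ℕ} [∀ ℓ, NeZero (M ℓ)]

lemma measurableSet_QK (K : Cell M) : MeasurableSet (QK M K) :=
  MeasurableSet.univ_pi fun ℓ => measurableSet_arc (M ℓ) (K ℓ)

lemma preimage_add_QK_shift (ℓ : Fin d) (K : Cell M) :
    (· + Pi.single ℓ (((M ℓ : ℝ)⁻¹ : ℝ) : AddCircle (1 : ℝ))) ⁻¹' QK M (shift M K ℓ 1)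
      = QK M K := by
  ext x
  simp only [QK_eq_pi, Set.mem_preimage, Set.mem_univ_pi]
  refine forall_congr' fun m => ?_
  rcases eq_or_ne m ℓ with rfl | hm
  · simpa [shift] using Set.ext_iff.1 (preimage_add_arc_add_one (M m) (K m)) (x m)
  · simp [shift, hm]

end TorusCells

section DiscreteKernels

variable {M : Fin d → ℕ} [∀ ℓ, NeZero (M ℓ)]

lemma mK_mul_mK_mul_Wdisc {W : Td d → ℝ} (hW : Integrable W) (K J : Cell M) :
    mK M * mK M * Wdisc M W K J
      = ∫ z in QK M K ×ˢ QK M J, W (z.1 - z.2) ∂(volume.prod volume) := by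
  rw [Wdisc, setIntegral_prod _ (integrable_comp_fst_sub_snd hW).integrableOn]
  have := (mK_pos (M := M)).ne'
  field_simp

lemma Wdisc_comm {W W' : Td d → ℝ} (hW : Integrable W) (hW' : Integrable W')
    (h : ∀ᵐ x, W x = W' (-x)) (K J : Cell M) : Wdisc M W K J = Wdisc M W' J K := by
  have := (mK_pos (M := M)).ne'
  apply mul_left_cancel₀ (mul_ne_zero this this)
  rw [mK_mul_mK_mul_Wdisc hW, mK_mul_mK_mul_Wdisc hW', setIntegral_prod_sub_swap h]

lemma Wdisc_shift {W : Td d → ℝ} (hW : Integrable W) (ℓ : Fin d) (K J : Cell M) :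
    Wdisc M W (shift M K ℓ 1) J = Wdisc M W K (shift M J ℓ (-1)) := by
  have := (mK_pos (M := M)).ne'
  apply mul_left_cancel₀ (mul_ne_zero this this)
  rw [mK_mul_mK_mul_Wdisc hW, mK_mul_mK_mul_Wdisc hW, ← preimage_add_QK_shift ℓ K,
    ← preimage_add_QK_shift ℓ (shift M J ℓ (-1)), shift_neg_one_one,
    setIntegral_prod_sub_preimage_add]

noncomputable def cellFun (M : Fin d → ℕ) [∀ ℓ, NeZero (M ℓ)] (c : Cell M → ℝ) : Td d → ℝ :=
  fun x => ∑ K : Cell M, (QK M K).indicator (fun _ => c K) x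

lemma memLp_cellFun (c : Cell M → ℝ) : MemLp (cellFun M c) 2 :=
  memLp_finsetSum _ fun K _ =>
    memLp_indicator_const 2 (measurableSet_QK K) (c K) (Or.inr (measure_ne_top _ _))

lemma integral_integral_cellFun {W : Td d → ℝ} (hW : Integrable W) (a b : Cell M → ℝ) :
    ∫ x, ∫ y, W (x - y) * cellFun M a x * cellFun M b y
      = ∑ K : Cell M, ∑ J : Cell M, mK M * mK M * Wdisc M W K J * a K * b J := by
  have hpt : ∀ z : Td d × Td d, W (z.1 - z.2) * cellFun M a z.1 * cellFun M b z.2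
      = ∑ K : Cell M, ∑ J : Cell M,
          (QK M K ×ˢ QK M J).indicator (fun z => W (z.1 - z.2)) z * (a K * b J) := by
    intro z
    rw [cellFun, cellFun, mul_assoc, sum_mul_sum, mul_sum]
    refine sum_congr rfl fun K _ => ?_
    rw [mul_sum]
    refine sum_congr rfl fun J _ => ?_
    by_cases h₁ : z.1 ∈ QK M K <;> by_cases h₂ : z.2 ∈ QK M J <;>
      simp [h₁, h₂, Set.indicator_of_mem, Set.indicator_of_notMem, Set.mem_prod]
  have hint : ∀ K J : Cell M, Integrable (fun z : Td d × Td d =>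
      (QK M K ×ˢ QK M J).indicator (fun z => W (z.1 - z.2)) z * (a K * b J))
      (volume.prod volume) := fun K J =>
    ((integrable_comp_fst_sub_snd hW).indicator
      ((measurableSet_QK K).prod (measurableSet_QK J))).mul_const _
  have hrow : ∀ K : Cell M, Integrable (fun z : Td d × Td d => ∑ J : Cell M,
      (QK M K ×ˢ QK M J).indicator (fun z => W (z.1 - z.2)) z * (a K * b J))
      (volume.prod volume) := fun K => integrable_finsetSum _ fun J _ => hint K J
  have hF : Integrable (fun z : Td d × Td d => W (z.1 - z.2) * cellFun M a z.1 * cellFun M b z.2)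
      (volume.prod volume) := by
    rw [funext hpt]
    exact integrable_finsetSum _ fun K _ => hrow K
  rw [integral_integral hF, funext hpt, integral_finsetSum _ fun K _ => hrow K]
  refine sum_congr rfl fun K _ => ?_
  rw [integral_finsetSum _ fun J _ => hint K J]
  refine sum_congr rfl fun J _ => ?_
  rw [integral_mul_const, integral_indicator ((measurableSet_QK K).prod (measurableSet_QK J)),
    ← mK_mul_mK_mul_Wdisc hW]
  ring

lemma kernelForm_Wdisc_nonneg {n : ℕ} {W : Fin n → Fin n → Td d → ℝ}
    (hW : ∀ i j, Integrable (W i j))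
    (hpsd : ∀ v : Fin n → Td d → ℝ, (∀ i, MemLp (v i) 2) →
      0 ≤ ∑ i, ∑ j, ∫ x : Td d, ∫ y : Td d, W i j (x - y) * v i x * v j y)
    (c : Fin n → Cell M → ℝ) : 0 ≤ kernelForm M (fun i j => Wdisc M (W i j)) c c := by
  simpa only [kernelForm, integral_integral_cellFun (hW _ _)] using
    hpsd (fun i => cellFun M (c i)) fun i => memLp_cellFun (c i)

end DiscreteKernels

lemma sum_Icc_sub_sub_one {A : Type*} [AddCommGroup A] (f : ℕ → A) (N : ℕ) :
    ∑ k ∈ Icc 1 N, (f k - f (k - 1)) = f N - f 0 := by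
  rw [← Ico_add_one_right_eq_Icc, sum_Ico_eq_sum_range]
  simpa [add_comm] using sum_range_sub f N

/-- uniform bound for the discrete Fisher information for the fully
implicit scheme with symmetric positive semidefinite kernels. -/
theorem fisher_bound_implicit_scheme {d n N : ℕ} (M : Fin d → ℕ) [∀ ℓ, NeZero (M ℓ)]
    (κ Δt : ℝ) (hκ : 0 < κ) (hΔt : 0 < Δt)
    (B : ℝ → ℝ) (α : ℝ) (hB : H2 B) (hB3 : H3 B α)
    (W : Fin n → Fin n → Td d → ℝ)
    (hW : ∀ i j, MeasureTheory.Integrable (W i j))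
    (hsym : ∀ i j, ∀ᵐ x : Td d, W i j x = W j i (-x))
    (hpsd : ∀ v : Fin n → Td d → ℝ, (∀ i, MeasureTheory.MemLp (v i) 2) →
      0 ≤ ∑ i, ∑ j, ∫ x : Td d, ∫ y : Td d, W i j (x - y) * v i x * v j y)
    (u : ℕ → Fin n → Cell M → ℝ)
    (hu0 : ∀ i K, 0 ≤ u 0 i K)
    (hpos : ∀ k ∈ Finset.Icc 1 N, ∀ i K, 0 < u k i K)
    (hstep : ∀ k ∈ Finset.Icc 1 N, ∀ i, Step M κ Δt B (u (k-1) i) (u k i)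
        (pot M (fun i j => Wdisc M (W i j)) (u k) i)) :
    (1 - α) * (HB M (u N) - HB M (u 0))
        + (α/κ) * (HR M (fun i j => Wdisc M (W i j)) (u N)
            - HR M (fun i j => Wdisc M (W i j)) (u 0))
        + κ * (1 - α)^2 * ∑ k ∈ Finset.Icc 1 N, Δt * Fisher M (u k) ≤ 0 := by
  have hsteps : ∀ k ∈ Icc 1 N, (1 - α) * (HB M (u k) - HB M (u (k - 1)))
      + α / κ * (HR M (fun i j => Wdisc M (W i j)) (u k)
        - HR M (fun i j => Wdisc M (W i j)) (u (k - 1)))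
      + κ * (1 - α) ^ 2 * (Δt * Fisher M (u k)) ≤ 0 := by
    intro k hk
    have hprev : ∀ i K, 0 ≤ u (k - 1) i K := by
      rcases eq_or_ne k 1 with rfl | hk1
      · exact hu0
      · exact fun i K => (hpos (k - 1) (by simp only [mem_Icc] at hk ⊢; omega) i K).le
    exact entropy_step hκ hΔt hB hB3 _ (fun i j => Wdisc_comm (hW i j) (hW j i) (hsym i j))
      (kernelForm_Wdisc_nonneg hW hpsd) (fun i j => Wdisc_shift (hW i j)) (hpos k hk) hprev
      (hstep k hk)
  have hsum := sum_nonpos hsteps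
  rwa [sum_add_distrib, sum_add_distrib, ← mul_sum, ← mul_sum, ← mul_sum, sum_Icc_sub_sub_one,
    sum_Icc_sub_sub_one] at hsum

end SG
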